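/- Let ℓ be the maximum number of literals in a purely universal conjunct S_i of φ̄_KB, m the number of such conjuncts, r the maximum number of universal quantifiers in an S_i, and k := |Var_0(φ̄_KB)|. Then every branch of the complete KE-tableau T_KB for Φ_KB is produced by O(ℓ·m·k^r) rule applications (so the maximum depth of T_KB is O(ℓ·m·k^r)), and T_KB has O(2^{ℓ·m·k^r}) leaves; consequently the procedure produces at most O(2^{ℓ·m·k^r}) induced interpretations M_ϑ of Φ_KB. -/

import Mathlib

/- ## Core formalization of the set-theoretic fragment 4LQS / 4LQS^R -/

namespace FourLQS

open scoped Classical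

/-- Syntax of `4LQS`-formulae, parametrized by the four sorts of variables.
Atoms of level 0: `x = y`, `x ∈ X¹`, `⟨x,y⟩ = X²`, `⟨x,y⟩ ∈ X³`;
level 1: `X¹ = Y¹`, `X¹ ∈ X²`; level 2: `X² = Y²`, `X² ∈ X³`.
Compound formulae: `¬`, `∧`, `∨` and universal quantification over
variables of the first three sorts. -/
inductive Formula (V0 V1 V2 V3 : Type) : Type
  | eq0     : V0 → V0 → Formula V0 V1 V2 V3
  | mem01   : V0 → V1 → Formula V0 V1 V2 V3
  | pairEq  : V0 → V0 → V2 → Formula V0 V1 V2 V3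
  | pairMem : V0 → V0 → V3 → Formula V0 V1 V2 V3
  | eq1     : V1 → V1 → Formula V0 V1 V2 V3
  | mem12   : V1 → V2 → Formula V0 V1 V2 V3
  | eq2     : V2 → V2 → Formula V0 V1 V2 V3
  | mem23   : V2 → V3 → Formula V0 V1 V2 V3
  | not     : Formula V0 V1 V2 V3 → Formula V0 V1 V2 V3
  | and     : Formula V0 V1 V2 V3 → Formula V0 V1 V2 V3 → Formula V0 V1 V2 V3
  | or      : Formula V0 V1 V2 V3 → Formula V0 V1 V2 V3 → Formula V0 V1 V2 V3
  | all0    : V0 → Formula V0 V1 V2 V3 → Formula V0 V1 V2 V3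
  | all1    : V1 → Formula V0 V1 V2 V3 → Formula V0 V1 V2 V3
  | all2    : V2 → Formula V0 V1 V2 V3 → Formula V0 V1 V2 V3

/-- A `4LQS`-interpretation `𝓜 = (D, M)`: variables of sort `i` are mapped
into the `i`-fold powerset of the domain `D`. -/
structure Interp (V0 V1 V2 V3 D : Type) where
  v0 : V0 → D
  v1 : V1 → Set D
  v2 : V2 → Set (Set D)
  v3 : V3 → Set (Set (Set D))

/-- Kuratowski encoding of ordered pairs: `⟨a,b⟩ = {{a},{a,b}}`. -/
def kpair {D : Type} (a b : D) : Set (Set D) := {{a}, {a, b}}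

variable {V0 V1 V2 V3 D : Type}

noncomputable def Interp.upd0 (M : Interp V0 V1 V2 V3 D) (x : V0) (d : D) :
    Interp V0 V1 V2 V3 D :=
  { M with v0 := fun y => if y = x then d else M.v0 y }

noncomputable def Interp.upd1 (M : Interp V0 V1 V2 V3 D) (X : V1) (s : Set D) :
    Interp V0 V1 V2 V3 D :=
  { M with v1 := fun Y => if Y = X then s else M.v1 Y }

noncomputable def Interp.upd2 (M : Interp V0 V1 V2 V3 D) (X : V2) (s : Set (Set D)) :
    Interp V0 V1 V2 V3 D :=
  { M with v2 := fun Y => if Y = X then s else M.v2 Y }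

/-- The satisfaction relation `𝓜 ⊨ φ` for `4LQS`-formulae, with pair terms
interpreted à la Kuratowski and quantifiers ranging over the appropriate
powerset levels of the domain. -/
def Sat (M : Interp V0 V1 V2 V3 D) : Formula V0 V1 V2 V3 → Prop
  | .eq0 x y      => M.v0 x = M.v0 y
  | .mem01 x X    => M.v0 x ∈ M.v1 X
  | .pairEq x y X => kpair (M.v0 x) (M.v0 y) = M.v2 X
  | .pairMem x y X => kpair (M.v0 x) (M.v0 y) ∈ M.v3 X
  | .eq1 X Y      => M.v1 X = M.v1 Y
  | .mem12 X Y    => M.v1 X ∈ M.v2 Y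
  | .eq2 X Y      => M.v2 X = M.v2 Y
  | .mem23 X Y    => M.v2 X ∈ M.v3 Y
  | .not f        => ¬ Sat M f
  | .and f g      => Sat M f ∧ Sat M g
  | .or f g       => Sat M f ∨ Sat M g
  | .all0 x f     => ∀ d : D, Sat (M.upd0 x d) f
  | .all1 X f     => ∀ s : Set D, Sat (M.upd1 X s) f
  | .all2 X f     => ∀ s : Set (Set D), Sat (M.upd2 X s) f

/-- A `4LQS`-formula is satisfiable if it has a `4LQS`-model (a model with
non-empty domain). -/
def Satisfiable (φ : Formula V0 V1 V2 V3) : Prop :=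
  ∃ (D : Type) (M : Interp V0 V1 V2 V3 D), Nonempty D ∧ Sat M φ

/-- Free variables of level 0. -/
def fv0 [DecidableEq V0] : Formula V0 V1 V2 V3 → Finset V0
  | .eq0 x y      => {x, y}
  | .mem01 x _    => {x}
  | .pairEq x y _ => {x, y}
  | .pairMem x y _ => {x, y}
  | .eq1 _ _      => ∅
  | .mem12 _ _    => ∅
  | .eq2 _ _      => ∅
  | .mem23 _ _    => ∅
  | .not f        => fv0 f
  | .and f g      => fv0 f ∪ fv0 g
  | .or f g       => fv0 f ∪ fv0 g
  | .all0 x f     => (fv0 f).erase x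
  | .all1 _ f     => fv0 f
  | .all2 _ f     => fv0 f

/-- Free variables of level 1. -/
def fv1 [DecidableEq V1] : Formula V0 V1 V2 V3 → Finset V1
  | .eq0 _ _      => ∅
  | .mem01 _ X    => {X}
  | .pairEq _ _ _ => ∅
  | .pairMem _ _ _ => ∅
  | .eq1 X Y      => {X, Y}
  | .mem12 X _    => {X}
  | .eq2 _ _      => ∅
  | .mem23 _ _    => ∅
  | .not f        => fv1 f
  | .and f g      => fv1 f ∪ fv1 g
  | .or f g       => fv1 f ∪ fv1 g
  | .all0 _ f     => fv1 f
  | .all1 X f     => (fv1 f).erase X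
  | .all2 _ f     => fv1 f

/-- Free variables of level 3 (level-3 variables are never quantified). -/
def fv3 [DecidableEq V3] : Formula V0 V1 V2 V3 → Finset V3
  | .eq0 _ _      => ∅
  | .mem01 _ _    => ∅
  | .pairEq _ _ _ => ∅
  | .pairMem _ _ X => {X}
  | .eq1 _ _      => ∅
  | .mem12 _ _    => ∅
  | .eq2 _ _      => ∅
  | .mem23 _ X    => {X}
  | .not f        => fv3 f
  | .and f g      => fv3 f ∪ fv3 g
  | .or f g       => fv3 f ∪ fv3 g
  | .all0 _ f     => fv3 f
  | .all1 _ f     => fv3 f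
  | .all2 _ f     => fv3 f

/- ### The syntactic shape of 4LQS-formulae and the 4LQS^R restrictions -/

/-- Propositional combinations of a given class of base formulae. -/
inductive PropComb (base : Formula V0 V1 V2 V3 → Prop) : Formula V0 V1 V2 V3 → Prop
  | base {f} : base f → PropComb base f
  | not {f} : PropComb base f → PropComb base (.not f)
  | and {f g} : PropComb base f → PropComb base g → PropComb base (.and f g)
  | or {f g} : PropComb base f → PropComb base g → PropComb base (.or f g)

/-- Quantifier-free atomic formulae of level 0. -/
def IsAtom0 : Formula V0 V1 V2 V3 → Prop
  | .eq0 _ _ => True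
  | .mem01 _ _ => True
  | .pairEq _ _ _ => True
  | .pairMem _ _ _ => True
  | _ => False

/-- Quantifier-free atomic formulae of level 1. -/
def IsAtom1 : Formula V0 V1 V2 V3 → Prop
  | .eq1 _ _ => True
  | .mem12 _ _ => True
  | _ => False

/-- Quantifier-free atomic formulae of level 2. -/
def IsAtom2 : Formula V0 V1 V2 V3 → Prop
  | .eq2 _ _ => True
  | .mem23 _ _ => True
  | _ => False

/-- Quantifier-free atomic formulae (of levels 0, 1, 2). -/
def IsAtom (f : Formula V0 V1 V2 V3) : Prop := IsAtom0 f ∨ IsAtom1 f ∨ IsAtom2 f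

/-- Purely universal formulae of level 1:
`(∀z₁)…(∀zₙ)φ₀` with `φ₀` a propositional combination of level-0 atoms. -/
inductive PU1 : Formula V0 V1 V2 V3 → Prop
  | base {x f} : PropComb IsAtom0 f → PU1 (.all0 x f)
  | step {x f} : PU1 f → PU1 (.all0 x f)

/-- Purely universal formulae of level 2. -/
inductive PU2 : Formula V0 V1 V2 V3 → Prop
  | base {X f} : PropComb (fun g => IsAtom0 g ∨ IsAtom1 g ∨ PU1 g) f → PU2 (.all1 X f)
  | step {X f} : PU2 f → PU2 (.all1 X f)

/-- Purely universal formulae of level 3. -/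
inductive PU3 : Formula V0 V1 V2 V3 → Prop
  | base {X f} : PropComb (fun g => IsAtom g ∨ PU1 g ∨ PU2 g) f → PU3 (.all2 X f)
  | step {X f} : PU3 f → PU3 (.all2 X f)

/-- `4LQS`-formulae: propositional combinations of quantifier-free atomic
formulae of levels 0, 1, 2 and of purely universal formulae of levels 1, 2, 3. -/
def Is4LQS (f : Formula V0 V1 V2 V3) : Prop :=
  PropComb (fun g => IsAtom g ∨ PU1 g ∨ PU2 g ∨ PU3 g) f

/-- `Occ b s f`: the formula `s` has an occurrence in `f` of polarity `b`
(`true` = positive, `false` = negative). -/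
inductive Occ : Bool → Formula V0 V1 V2 V3 → Formula V0 V1 V2 V3 → Prop
  | refl (f) : Occ true f f
  | not {b s f} : Occ b s f → Occ (!b) s (.not f)
  | andL {b s f g} : Occ b s f → Occ b s (.and f g)
  | andR {b s f g} : Occ b s g → Occ b s (.and f g)
  | orL {b s f g} : Occ b s f → Occ b s (.or f g)
  | orR {b s f g} : Occ b s g → Occ b s (.or f g)
  | all0 {b s x f} : Occ b s f → Occ b s (.all0 x f)
  | all1 {b s X f} : Occ b s f → Occ b s (.all1 X f)
  | all2 {b s X f} : Occ b s f → Occ b s (.all2 X f)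

/-- `s` occurs (with some polarity) in `f`. -/
def OccAny (s f : Formula V0 V1 V2 V3) : Prop := Occ true s f ∨ Occ false s f

/-- Occurrences reachable through propositional connectives only
(hence not lying within any quantified subformula). -/
inductive OccProp : Bool → Formula V0 V1 V2 V3 → Formula V0 V1 V2 V3 → Prop
  | refl (f) : OccProp true f f
  | not {b s f} : OccProp b s f → OccProp (!b) s (.not f)
  | andL {b s f g} : OccProp b s f → OccProp b s (.and f g)
  | andR {b s f g} : OccProp b s g → OccProp b s (.and f g)
  | orL {b s f g} : OccProp b s f → OccProp b s (.or f g)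
  | orR {b s f g} : OccProp b s g → OccProp b s (.or f g)

def mkAll0 (zs : List V0) (f : Formula V0 V1 V2 V3) : Formula V0 V1 V2 V3 :=
  zs.foldr .all0 f

def mkAll1 (Zs : List V1) (f : Formula V0 V1 V2 V3) : Formula V0 V1 V2 V3 :=
  Zs.foldr .all1 f

def mkAll2 (Ws : List V2) (f : Formula V0 V1 V2 V3) : Formula V0 V1 V2 V3 :=
  Ws.foldr .all2 f

/-- Conjunction of a non-empty list of formulae (head plus the rest). -/
def conjNE : Formula V0 V1 V2 V3 → List (Formula V0 V1 V2 V3) → Formula V0 V1 V2 V3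
  | f, [] => f
  | f, g :: gs => .and f (conjNE g gs)

/-- Restriction 1 of `4LQS^R`: for every purely universal formula
`(∀Z¹₁)…(∀Z¹ₘ)φ₁` of level 2 occurring in `ψ` and every purely universal
formula `(∀z₁)…(∀zₙ)φ₀` of level 1 occurring negatively in `φ₁`, the matrix
`φ₀` is a propositional combination of level-0 atoms and the implication
`¬φ₀ → ⋀ᵢ⋀ⱼ zᵢ ∈ Z¹ⱼ` is a valid `4LQS`-formula (linking). -/
def Restriction1 (ψ : Formula V0 V1 V2 V3) : Prop :=
  ∀ (Zs : List V1) (φ₁ : Formula V0 V1 V2 V3), Zs ≠ [] →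
    PropComb (fun g => IsAtom0 g ∨ IsAtom1 g ∨ PU1 g) φ₁ →
    OccAny (mkAll1 Zs φ₁) ψ →
    ∀ (zs : List V0) (φ₀ : Formula V0 V1 V2 V3), zs ≠ [] →
      PropComb IsAtom0 φ₀ →
      Occ false (mkAll0 zs φ₀) φ₁ →
      (∀ (D : Type) (M : Interp V0 V1 V2 V3 D), Nonempty D →
        ¬ Sat M φ₀ → ∀ z ∈ zs, ∀ Z ∈ Zs, M.v0 z ∈ M.v1 Z)

/-- Restriction 2 of `4LQS^R`: for every purely universal formula
`(∀Z²₁)…(∀Z²ₚ)φ₂` of level 3 occurring in `ψ`: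
every purely universal formula of level 1 occurring negatively in `φ₂` and
not occurring within a purely universal formula of level 2 must be of the
special form `(∀z₁)…(∀zₙ)¬(⋀ᵢ⋀ⱼ ⟨zᵢ,zⱼ⟩ = Y²ᵢⱼ)`, and purely universal
formulae of level 2 may occur only positively in `φ₂`. -/
def Restriction2 (ψ : Formula V0 V1 V2 V3) : Prop :=
  ∀ (Ws : List V2) (φ₂ : Formula V0 V1 V2 V3), Ws ≠ [] →
    PropComb (fun g => IsAtom g ∨ PU1 g ∨ PU2 g) φ₂ →
    OccAny (mkAll2 Ws φ₂) ψ →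
    ((∀ (zs : List V0) (φ₀ : Formula V0 V1 V2 V3), zs ≠ [] →
        PropComb IsAtom0 φ₀ →
        OccProp false (mkAll0 zs φ₀) φ₂ →
        ∃ (Y : V0 → V0 → V2) (p : Formula V0 V1 V2 V3) (ps : List (Formula V0 V1 V2 V3)),
          ((zs.product zs).map fun q => Formula.pairEq q.1 q.2 (Y q.1 q.2)) = p :: ps ∧
          φ₀ = .not (conjNE p ps)) ∧
     (∀ (Zs : List V1) (φ₁ : Formula V0 V1 V2 V3), Zs ≠ [] →
        PropComb (fun g => IsAtom0 g ∨ IsAtom1 g ∨ PU1 g) φ₁ →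
        ¬ Occ false (mkAll1 Zs φ₁) φ₂))

/-- `4LQS^R`-formulae: `4LQS`-formulae satisfying restrictions 1 and 2. -/
def Is4LQSR (f : Formula V0 V1 V2 V3) : Prop :=
  Is4LQS f ∧ Restriction1 f ∧ Restriction2 f

end FourLQS
namespace FourLQS

/- ### Query conjunctions and Conjunctive Query Answering for 4LQS^R -/

/-- Quantifier-free atomic formulae of level 0 of the types admitted in
query conjunctions: `x = y`, `x ∈ X¹`, `⟨x,y⟩ ∈ X³`. -/
inductive QAtom (V0 V1 V3 : Type) : Type
  | eq   : V0 → V0 → QAtom V0 V1 V3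
  | mem1 : V0 → V1 → QAtom V0 V1 V3
  | mem3 : V0 → V0 → V3 → QAtom V0 V1 V3
deriving DecidableEq

/-- A literal: an admitted level-0 atomic formula or its negation. -/
structure QLit (V0 V1 V3 : Type) : Type where
  pos : Bool
  atom : QAtom V0 V1 V3
deriving DecidableEq

variable {V0 V1 V2 V3 D : Type}

def QAtom.toFormula : QAtom V0 V1 V3 → Formula V0 V1 V2 V3
  | .eq x y => .eq0 x y
  | .mem1 x X => .mem01 x X
  | .mem3 x y X => .pairMem x y X

def QLit.toFormula (l : QLit V0 V1 V3) : Formula V0 V1 V2 V3 :=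
  match l.pos with
  | true => l.atom.toFormula
  | false => .not l.atom.toFormula

def QAtom.sat (M : Interp V0 V1 V2 V3 D) : QAtom V0 V1 V3 → Prop
  | .eq x y => M.v0 x = M.v0 y
  | .mem1 x X => M.v0 x ∈ M.v1 X
  | .mem3 x y X => kpair (M.v0 x) (M.v0 y) ∈ M.v3 X

def QLit.sat (M : Interp V0 V1 V2 V3 D) (l : QLit V0 V1 V3) : Prop :=
  match l.pos with
  | true => l.atom.sat M
  | false => ¬ l.atom.sat M

/-- Applying a level-0 substitution to an atom. -/
def QAtom.subst0 (σ : V0 → V0) : QAtom V0 V1 V3 → QAtom V0 V1 V3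
  | .eq x y => .eq (σ x) (σ y)
  | .mem1 x X => .mem1 (σ x) X
  | .mem3 x y X => .mem3 (σ x) (σ y) X

def QLit.subst0 (σ : V0 → V0) (l : QLit V0 V1 V3) : QLit V0 V1 V3 :=
  ⟨l.pos, l.atom.subst0 σ⟩

def QAtom.fv0 [DecidableEq V0] : QAtom V0 V1 V3 → Finset V0
  | .eq x y => {x, y}
  | .mem1 x _ => {x}
  | .mem3 x y _ => {x, y}

def QAtom.fv1 [DecidableEq V1] : QAtom V0 V1 V3 → Finset V1
  | .eq _ _ => ∅
  | .mem1 _ X => {X}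
  | .mem3 _ _ _ => ∅

def QAtom.fv3 [DecidableEq V3] : QAtom V0 V1 V3 → Finset V3
  | .eq _ _ => ∅
  | .mem1 _ _ => ∅
  | .mem3 _ _ X => {X}

/-- Level-0 variables of a query conjunction. -/
def qvars0 [DecidableEq V0] (ψ : List (QLit V0 V1 V3)) : Finset V0 :=
  ψ.foldr (fun l s => l.atom.fv0 ∪ s) ∅

def qvars1 [DecidableEq V1] (ψ : List (QLit V0 V1 V3)) : Finset V1 :=
  ψ.foldr (fun l s => l.atom.fv1 ∪ s) ∅

def qvars3 [DecidableEq V3] (ψ : List (QLit V0 V1 V3)) : Finset V3 :=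
  ψ.foldr (fun l s => l.atom.fv3 ∪ s) ∅

/-- An admissible query conjunction `ψ` for `φ`: a conjunction of
quantifier-free level-0 literals of the admitted types with
`Var₀(ψ) ∩ Var₀(φ) = ∅` and `Var₁(ψ) ∪ Var₃(ψ) ⊆ Var₁(φ) ∪ Var₃(φ)`. -/
def Admissible [DecidableEq V0] [DecidableEq V1] [DecidableEq V3]
    (ψ : List (QLit V0 V1 V3)) (φ : Formula V0 V1 V2 V3) : Prop :=
  Disjoint (qvars0 ψ) (fv0 φ) ∧ qvars1 ψ ⊆ fv1 φ ∧ qvars3 ψ ⊆ fv3 φ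

/-- The candidate substitutions `σ' = {x₁/y₁, …, xₙ/yₙ}` from the level-0
variables of `ψ` into `Var₀(φ)` (represented as total maps that are the
identity outside `Var₀(ψ)`). -/
def Candidates [DecidableEq V0] (φ : Formula V0 V1 V2 V3)
    (ψ : List (QLit V0 V1 V3)) : Set (V0 → V0) :=
  {σ | (∀ x ∈ qvars0 ψ, σ x ∈ fv0 φ) ∧ (∀ x, x ∉ qvars0 ψ → σ x = x)}

/-- `φ ∧ ψσ` is satisfiable (by a single 4LQS-interpretation). -/
def JointlySat (φ : Formula V0 V1 V2 V3) (ψ : List (QLit V0 V1 V3))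
    (σ : V0 → V0) : Prop :=
  ∃ (D : Type) (M : Interp V0 V1 V2 V3 D), Nonempty D ∧ Sat M φ ∧
    ∀ l ∈ ψ, (l.subst0 σ).sat M

/-- The answer set `Σ'` of `ψ` w.r.t. `φ`: all candidate substitutions `σ'`
such that `𝓜 ⊨ φ ∧ ψσ'` for some 4LQS-interpretation `𝓜`. -/
def AnswerSet [DecidableEq V0] (φ : Formula V0 V1 V2 V3)
    (ψ : List (QLit V0 V1 V3)) : Set (V0 → V0) :=
  {σ | σ ∈ Candidates φ ψ ∧ JointlySat φ ψ σ}

end FourLQS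

namespace KE

open FourLQS

/-- Level-0 literals over natural-number variables: `x = y`, `x ∈ X¹`,
`⟨x,y⟩ ∈ X³` or their negations. -/
abbrev Lit := QLit ℕ ℕ ℕ

/-- A disjunction `β₁ ∨ … ∨ βₙ` of level-0 literals. -/
abbrev Clause := List Lit

/-- A branch of a KE-tableau: the list of formulae (disjunctions; a literal
is a one-disjunct disjunction) occurring on it. -/
abbrev Branch := List Clause

/-- The complement `Ā` of a literal. -/
def Lit.compl (l : Lit) : Lit := ⟨!l.pos, l.atom⟩

/-- A literal, viewed as a (one-disjunct) formula on a branch. -/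
def litC (l : Lit) : Clause := [l]

/-- A branch is closed if it contains both `A` and `¬A` for some formula `A`;
otherwise it is open. -/
def OpenB (β : Branch) : Prop := ¬ ∃ l : Lit, litC l ∈ β ∧ litC l.compl ∈ β

/-- A disjunction `β₁ ∨ … ∨ βₙ` is fulfilled on a branch if some disjunct
`βᵢ` occurs on the branch. -/
def Fulfilled (β : Branch) (c : Clause) : Prop := ∃ l ∈ c, litC l ∈ β

/-- A branch is complete if every disjunction occurring on it is fulfilled. -/
def CompleteB (β : Branch) : Prop := ∀ c ∈ β, Fulfilled β c

/-- The E-rule is applicable to the disjunction `c` on the branch `β` with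
principal disjunct `l` if the complements of all the other disjuncts of `c`
occur on `β` (the set `𝒮^β̄ᵢ` of premisses of the E-rule lies on `β`). -/
def EApp (β : Branch) (c : Clause) (l : Lit) : Prop :=
  l ∈ c ∧ ∀ l' ∈ c, l' ≠ l → litC l'.compl ∈ β

/-- The PB-rule choice of Procedure Saturate-KB: the principal literal is the
lowest-index disjunct of `c` whose complement is not yet on `β`. -/
def PBpick (β : Branch) (c : Clause) (l : Lit) : Prop :=
  ∃ i : ℕ, (c)[i]? = some l ∧ litC l.compl ∉ β ∧
    ∀ j < i, ∀ l' : Lit, (c)[j]? = some l' → litC l'.compl ∈ β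

/-- One (unrestricted) KE-tableau expansion step on a tableau, represented by
the list of its branches: either the E-rule appends the principal disjunct to
a branch, or the PB-rule splits a branch on a literal and its complement. -/
inductive Step : List Branch → List Branch → Prop
  | e {L₁ L₂ : List Branch} {β : Branch} {c : Clause} {l : Lit} :
      c ∈ β → EApp β c l →
      Step (L₁ ++ β :: L₂) (L₁ ++ (β ++ [litC l]) :: L₂)
  | pb {L₁ L₂ : List Branch} {β : Branch} (A : Lit) :
      Step (L₁ ++ β :: L₂) (L₁ ++ (β ++ [litC A]) :: (β ++ [litC A.compl]) :: L₂)

/-- `T` is a KE-tableau for `Φ`: it is obtained from the one-branch tree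
listing `Φ` by finitely many applications of the E-rule and the PB-rule. -/
def IsKETableau (Φ : List Clause) (T : List Branch) : Prop :=
  Relation.ReflTransGen Step [Φ] T

/-- One step of Procedure Saturate-KB: a rule is applied to a non-fulfilled
disjunction on an open, non-complete branch; the E-rule is applied whenever
possible, and otherwise the PB-rule is applied to the lowest-index disjunct
whose complement is missing from the branch. -/
inductive ProcStep : List Branch → List Branch → Prop
  | e {L₁ L₂ : List Branch} {β : Branch} {c : Clause} {l : Lit} :
      OpenB β → ¬ CompleteB β → c ∈ β → ¬ Fulfilled β c → EApp β c l →
      ProcStep (L₁ ++ β :: L₂) (L₁ ++ (β ++ [litC l]) :: L₂)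
  | pb {L₁ L₂ : List Branch} {β : Branch} {c : Clause} {l : Lit} :
      OpenB β → ¬ CompleteB β → c ∈ β → ¬ Fulfilled β c →
      (¬ ∃ l', EApp β c l') → PBpick β c l →
      ProcStep (L₁ ++ β :: L₂)
        (L₁ ++ (β ++ [litC l]) :: (β ++ [litC l.compl]) :: L₂)

/-- The set of non-fulfilled disjunctions on a branch. -/
def nfSet (β : Branch) : Set Clause := {c | c ∈ β ∧ ¬ Fulfilled β c}

/-- The set `B^β̄`: the disjuncts of `c` whose complements occur on `β`. -/
def BSet (β : Branch) (c : Clause) : Set Lit := {l | l ∈ c ∧ litC l.compl ∈ β}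

/-- A set of disjunctions of level-0 literals is satisfiable if some
4LQS-interpretation (with non-empty domain) satisfies all its members. -/
def SatisfiableC (Φ : List Clause) : Prop :=
  ∃ (D : Type) (M : Interp ℕ ℕ ℕ ℕ D), Nonempty D ∧
    ∀ c ∈ Φ, ∃ l ∈ c, QLit.sat M l

end KE

namespace KE

open FourLQS

/-- The identically-false and identically-true formulae (over ℕ-variables). -/
def falseF : Formula ℕ ℕ ℕ ℕ := .and (.eq0 0 0) (.not (.eq0 0 0))
def trueF : Formula ℕ ℕ ℕ ℕ := .or (.eq0 0 0) (.not (.eq0 0 0))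

def orList : List (Formula ℕ ℕ ℕ ℕ) → Formula ℕ ℕ ℕ ℕ
  | [] => falseF
  | f :: fs => fs.foldl .or f

def andList : List (Formula ℕ ℕ ℕ ℕ) → Formula ℕ ℕ ℕ ℕ
  | [] => trueF
  | f :: fs => fs.foldl .and f

/-- The formula corresponding to a disjunction of level-0 literals. -/
def clauseToFormula (c : Clause) : Formula ℕ ℕ ℕ ℕ :=
  orList (c.map QLit.toFormula)

/-- A purely universal conjunct `Sᵢ = (∀z₁ⁱ)…(∀zₙᵢⁱ)χᵢ` of `φ̄_KB`, given by
its quantifier prefix and its matrix (a disjunction of level-0 literals). -/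
abbrev PUConj := List ℕ × Clause

/-- The formula `(∀z₁ⁱ)…(∀zₙᵢⁱ)χᵢ`. -/
def PUConj.toFormula (S : PUConj) : Formula ℕ ℕ ℕ ℕ :=
  mkAll0 S.1 (clauseToFormula S.2)

/-- `φ̄_KB`: the conjunction of the quantifier-free atomic conjuncts
`F₁, …, F_k` and the purely universal conjuncts `S₁, …, Sₘ`. -/
def phibar (Fs : List Lit) (Ss : List PUConj) : Formula ℕ ℕ ℕ ℕ :=
  andList (Fs.map QLit.toFormula ++ Ss.map PUConj.toFormula)

/-- All substitutions mapping the listed variables into the listed values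
(and the identity elsewhere). -/
def allSubs (zs : List ℕ) (vals : List ℕ) : List (ℕ → ℕ) :=
  zs.foldr (fun z acc => vals.flatMap (fun v => acc.map (fun σ => Function.update σ z v)))
    [fun x => x]

/-- `Exp(Sᵢ)`: all the instances `Sᵢ{z₁ⁱ/x_{a₁}, …, zₙᵢⁱ/x_{aₙᵢ}}` of the
matrix of `Sᵢ` with `x_{a₁}, …, x_{aₙᵢ}` among the given variables. -/
def expOf (S : PUConj) (vals : List ℕ) : List Clause :=
  (allSubs S.1 vals).map (fun σ => S.2.map (QLit.subst0 σ))

/-- The list of the variables `Var₀(φ̄_KB)`. -/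
def var0List (Fs : List Lit) (Ss : List PUConj) : List ℕ :=
  (fv0 (phibar Fs Ss)).sort (· ≤ ·)

/-- `Φ_KB`: the quantifier-free atomic conjuncts of `φ̄_KB` together with all
the instances in `⋃ᵢ Exp(Sᵢ)` (each a disjunction of level-0 literals). -/
def PhiKB (Fs : List Lit) (Ss : List PUConj) : List Clause :=
  Fs.map litC ++ Ss.flatMap (fun S => expOf S (var0List Fs Ss))

/-- The level-0 variables occurring in a disjunction. -/
def clauseVars (c : Clause) : Finset ℕ :=
  c.foldr (fun l s => l.atom.fv0 ∪ s) ∅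

/-- The level-0 variables occurring on a branch. -/
def branchVars (ϑ : Branch) : Finset ℕ :=
  ϑ.foldr (fun c s => clauseVars c ∪ s) ∅

/-- The domain `D_ϑ` of the interpretation induced by a branch `ϑ`:
the level-0 variables occurring on `ϑ`. -/
abbrev BDom (ϑ : Branch) := {x : ℕ // x ∈ branchVars ϑ}

/-- The `4LQS^R`-interpretation `𝓜_ϑ` induced by a branch `ϑ`:
`M_ϑ x := x`, `M_ϑ X¹ := {x : (x ∈ X¹) occurs on ϑ}`, and
`M_ϑ X³ := {⟨x,y⟩ : (⟨x,y⟩ ∈ X³) occurs on ϑ}`. -/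
noncomputable def inducedInterp (ϑ : Branch) (h : (branchVars ϑ).Nonempty) :
    Interp ℕ ℕ ℕ ℕ (BDom ϑ) where
  v0 := fun x => if hx : x ∈ branchVars ϑ then ⟨x, hx⟩ else ⟨h.choose, h.choose_spec⟩
  v1 := fun X => {d | litC ⟨true, QAtom.mem1 d.val X⟩ ∈ ϑ}
  v2 := fun _ => ∅
  v3 := fun X => {s | ∃ x y : BDom ϑ,
    s = kpair x y ∧ litC ⟨true, QAtom.mem3 x.val y.val X⟩ ∈ ϑ}

theorem instNonemptyBDom (ϑ : Branch) (h : (branchVars ϑ).Nonempty) : Nonempty (BDom ϑ) :=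
  ⟨⟨h.choose, h.choose_spec⟩⟩

end KE

/-! A rule of Procedure Saturate-KB only acts on a non-fulfilled clause, i.e. on an instance in
`⋃ᵢ Exp(Sᵢ)`, and appends a disjunct of it (or, for PB, also its complement) that is not yet on
the branch. Hence every branch is `Φ_KB` followed by distinct literals drawn from the disjuncts of
the instances and their complements, of which there are at most `2ℓmk^r`: this bounds the depth.
For the leaves, weigh a branch of length `n` by `2 ^ (N - n)`, where `N` bounds the branch
lengths: an E-step does not increase the total weight and a PB-step preserves it, so a tableau
has at most `2 ^ (N - |Φ_KB|)` branches. -/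

namespace FourLQS

variable {V0 V1 V2 V3 : Type} [DecidableEq V0]

lemma fv0_subset_fv0_foldl
    {op : Formula V0 V1 V2 V3 → Formula V0 V1 V2 V3 → Formula V0 V1 V2 V3}
    (hop : ∀ f g, fv0 (op f g) = fv0 f ∪ fv0 g) (fs : List (Formula V0 V1 V2 V3))
    (a : Formula V0 V1 V2 V3) : ∀ f ∈ a :: fs, fv0 f ⊆ fv0 (fs.foldl op a) := by
  induction fs generalizing a with
  | nil => simp
  | cons g gs ih =>
    intro f hf
    rw [List.foldl_cons]
    rcases List.mem_cons.mp hf with rfl | hf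
    · exact (hop f g ▸ Finset.subset_union_left).trans (ih _ _ List.mem_cons_self)
    · rcases List.mem_cons.mp hf with rfl | hf
      · exact (hop a f ▸ Finset.subset_union_right).trans (ih _ _ List.mem_cons_self)
      · exact ih _ f (List.mem_cons_of_mem _ hf)

lemma QLit.fv0_toFormula (l : QLit V0 V1 V3) :
    fv0 (l.toFormula : Formula V0 V1 V2 V3) = l.atom.fv0 := by
  obtain ⟨_ | _, a⟩ := l <;> cases a <;> rfl

lemma QAtom.fv0_nonempty (a : QAtom V0 V1 V3) : a.fv0.Nonempty := by
  cases a <;> simp [QAtom.fv0]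

end FourLQS

namespace KE

open FourLQS

lemma fv0_subset_fv0_andList {fs : List (Formula ℕ ℕ ℕ ℕ)} {f : Formula ℕ ℕ ℕ ℕ}
    (hf : f ∈ fs) : fv0 f ⊆ fv0 (andList fs) := by
  cases fs with
  | nil => simp at hf
  | cons g gs => exact fv0_subset_fv0_foldl (fun _ _ => rfl) gs g f hf

lemma fv0_subset_fv0_orList {fs : List (Formula ℕ ℕ ℕ ℕ)} {f : Formula ℕ ℕ ℕ ℕ}
    (hf : f ∈ fs) : fv0 f ⊆ fv0 (orList fs) := by
  cases fs with
  | nil => simp at hf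
  | cons g gs => exact fv0_subset_fv0_foldl (fun _ _ => rfl) gs g f hf

lemma card_fv0_phibar_pos {Fs : List Lit} {Ss : List PUConj} {S : PUConj} (hS : S ∈ Ss)
    (hprefix : S.1 = []) (hmatrix : S.2 ≠ []) : 0 < (fv0 (phibar Fs Ss)).card := by
  obtain ⟨l, hl⟩ := List.exists_mem_of_ne_nil S.2 hmatrix
  obtain ⟨x, hx⟩ := l.atom.fv0_nonempty
  have hS' : PUConj.toFormula S = clauseToFormula S.2 := by rw [PUConj.toFormula, hprefix]; rfl
  refine Finset.card_pos.mpr ⟨x, fv0_subset_fv0_andList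
    (List.mem_append_right _ (List.mem_map_of_mem hS)) ?_⟩
  rw [hS']
  exact fv0_subset_fv0_orList (List.mem_map_of_mem hl) ((QLit.fv0_toFormula l).symm ▸ hx)

lemma length_allSubs (zs vals : List ℕ) :
    (allSubs zs vals).length = vals.length ^ zs.length := by
  induction zs with
  | nil => rfl
  | cons z zs ih => simp_all [allSubs, List.length_flatMap, pow_succ, mul_comm]

lemma length_flatten_expOf (S : PUConj) (vals : List ℕ) :
    (expOf S vals).flatten.length = vals.length ^ S.1.length * S.2.length := by
  simp [expOf, List.length_flatten, Function.comp_def, length_allSubs]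

/-- The disjuncts of all the instances in `⋃ᵢ Exp(Sᵢ)`. -/
def instanceLits (Fs : List Lit) (Ss : List PUConj) : List Lit :=
  Ss.flatMap fun S => (expOf S (var0List Fs Ss)).flatten

lemma length_flatten_expOf_le {Fs : List Lit} {Ss : List PUConj} {S : PUConj} {ℓ r : ℕ}
    (hS : S ∈ Ss) (hℓ : S.2.length ≤ ℓ) (hr : S.1.length ≤ r) :
    (expOf S (var0List Fs Ss)).flatten.length ≤ ℓ * (fv0 (phibar Fs Ss)).card ^ r := by
  rw [length_flatten_expOf, var0List, Finset.length_sort, mul_comm]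
  set k := (fv0 (phibar Fs Ss)).card
  rcases Nat.eq_zero_or_pos k with hk | hk
  · -- with no level-0 variables only quantifier-free conjuncts have instances, and those are empty
    by_cases hprefix : S.1 = []
    · have hmatrix : S.2 = [] := by
        by_contra hmatrix
        exact hk.not_gt (card_fv0_phibar_pos hS hprefix hmatrix)
      simp [hmatrix]
    · simp [hk, zero_pow (List.length_pos_iff.mpr hprefix).ne']
  · exact Nat.mul_le_mul hℓ (Nat.pow_le_pow_right hk hr)

lemma length_instanceLits_le {Fs : List Lit} {Ss : List PUConj} {ℓ r : ℕ}
    (hℓ : ∀ S ∈ Ss, S.2.length ≤ ℓ) (hr : ∀ S ∈ Ss, S.1.length ≤ r) :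
    (instanceLits Fs Ss).length ≤ ℓ * Ss.length * (fv0 (phibar Fs Ss)).card ^ r := by
  rw [instanceLits, List.length_flatMap]
  refine (List.sum_le_card_nsmul _ (ℓ * (fv0 (phibar Fs Ss)).card ^ r) ?_).trans_eq ?_
  · simp only [List.mem_map]
    rintro _ ⟨S, hS, rfl⟩
    exact length_flatten_expOf_le hS (hℓ S hS) (hr S hS)
  · rw [List.length_map, smul_eq_mul]
    ring

lemma subset_instanceLits {Fs : List Lit} {Ss : List PUConj} {c : Clause}
    (hc : c ∈ PhiKB Fs Ss) (hunit : ∀ l, c ≠ litC l) : c ⊆ instanceLits Fs Ss := by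
  rcases List.mem_append.mp hc with hc | hc
  · obtain ⟨l, -, rfl⟩ := List.mem_map.mp hc
    exact absurd rfl (hunit l)
  · obtain ⟨S, hS, hcS⟩ := List.mem_flatMap.mp hc
    exact fun l hl => List.mem_flatMap.mpr ⟨S, hS, List.mem_flatten.mpr ⟨c, hcS, hl⟩⟩

@[simp]
lemma Lit.compl_compl (l : Lit) : l.compl.compl = l := by
  simp [Lit.compl]

def complClosure (L : List Lit) : List Lit := L ++ L.map Lit.compl

lemma length_complClosure (L : List Lit) : (complClosure L).length = 2 * L.length := by
  simp [complClosure, two_mul]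

lemma subset_complClosure (L : List Lit) : L ⊆ complClosure L :=
  List.subset_append_left _ _

lemma compl_mem_complClosure {L : List Lit} {l : Lit} (hl : l ∈ complClosure L) :
    l.compl ∈ complClosure L := by
  rcases List.mem_append.mp hl with hl | hl
  · exact List.mem_append_right _ (List.mem_map_of_mem hl)
  · obtain ⟨l', hl', rfl⟩ := List.mem_map.mp hl
    rw [Lit.compl_compl]
    exact List.mem_append_left _ hl'

section Saturation

variable {Φ : List Clause} {U : List Lit}

def IsUnitExtension (Φ : List Clause) (U : List Lit) (β : Branch) : Prop :=
  ∃ ls : List Lit, β = Φ ++ ls.map litC ∧ ls.Nodup ∧ ls ⊆ U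

lemma IsUnitExtension.length_le {β : Branch} (h : IsUnitExtension Φ U β) :
    β.length ≤ Φ.length + U.length := by
  obtain ⟨ls, rfl, hnd, hsub⟩ := h
  simpa using (hnd.subperm hsub).length_le

lemma IsUnitExtension.append {β : Branch} {l : Lit} (h : IsUnitExtension Φ U β)
    (hlU : l ∈ U) (hlβ : litC l ∉ β) : IsUnitExtension Φ U (β ++ [litC l]) := by
  obtain ⟨ls, rfl, hnd, hsub⟩ := h
  refine ⟨ls ++ [l], by simp, hnd.append (List.nodup_singleton l) ?_, ?_⟩
  · intro l' hl' hl'l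
    obtain rfl := List.mem_singleton.mp hl'l
    exact hlβ (List.mem_append_right _ (List.mem_map_of_mem hl'))
  · exact List.append_subset.mpr ⟨hsub, by simpa using hlU⟩

lemma IsUnitExtension.mem_of_not_fulfilled {β : Branch} {c : Clause}
    (h : IsUnitExtension Φ U β) (hc : c ∈ β) (hnf : ¬ Fulfilled β c) :
    c ∈ Φ ∧ ∀ l, c ≠ litC l := by
  have hunit : ∀ l, c ≠ litC l := by
    rintro l rfl
    exact hnf ⟨l, List.mem_singleton_self l, hc⟩
  obtain ⟨ls, rfl, -, -⟩ := h
  refine ⟨?_, hunit⟩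
  rcases List.mem_append.mp hc with hc | hc
  · exact hc
  · obtain ⟨l, -, rfl⟩ := List.mem_map.mp hc
    exact absurd rfl (hunit l)

lemma ProcStep.isUnitExtension (hΦU : ∀ c ∈ Φ, (∀ l, c ≠ litC l) → c ⊆ U)
    (hUcompl : ∀ l ∈ U, l.compl ∈ U) {T T' : List Branch}
    (hT : ∀ β ∈ T, IsUnitExtension Φ U β) (h : ProcStep T T') :
    ∀ β ∈ T', IsUnitExtension Φ U β := by
  cases h with
  | e _ _ hc hnf happ =>
    simp only [List.forall_mem_append, List.forall_mem_cons] at hT ⊢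
    obtain ⟨hL₁, hβ, hL₂⟩ := hT
    obtain ⟨hcΦ, hunit⟩ := hβ.mem_of_not_fulfilled hc hnf
    exact ⟨hL₁, hβ.append (hΦU _ hcΦ hunit happ.1) (fun hl => hnf ⟨_, happ.1, hl⟩), hL₂⟩
  | pb _ _ hc hnf _ hpick =>
    obtain ⟨i, hi, hcompl, -⟩ := hpick
    have hlc := List.mem_of_getElem? hi
    simp only [List.forall_mem_append, List.forall_mem_cons] at hT ⊢
    obtain ⟨hL₁, hβ, hL₂⟩ := hT
    obtain ⟨hcΦ, hunit⟩ := hβ.mem_of_not_fulfilled hc hnf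
    have hlU := hΦU _ hcΦ hunit hlc
    exact ⟨hL₁, hβ.append hlU (fun hl => hnf ⟨_, hlc, hl⟩),
      hβ.append (hUcompl _ hlU) hcompl, hL₂⟩

lemma isUnitExtension_of_reachable (hΦU : ∀ c ∈ Φ, (∀ l, c ≠ litC l) → c ⊆ U)
    (hUcompl : ∀ l ∈ U, l.compl ∈ U) {T : List Branch}
    (hT : Relation.ReflTransGen ProcStep [Φ] T) : ∀ β ∈ T, IsUnitExtension Φ U β := by
  induction hT with
  | refl => simpa using ⟨[], by simp, List.nodup_nil, List.nil_subset _⟩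
  | tail _ h ih => exact h.isUnitExtension hΦU hUcompl ih

end Saturation

def branchWeight (N : ℕ) (β : Branch) : ℕ := 2 ^ (N - β.length)

lemma ProcStep.sum_branchWeight_le {N : ℕ} {T T' : List Branch}
    (hN : ∀ β ∈ T', β.length ≤ N) (h : ProcStep T T') :
    (T'.map (branchWeight N)).sum ≤ (T.map (branchWeight N)).sum := by
  cases h with
  | @e L₁ L₂ β =>
    have hle : 2 ^ (N - (β.length + 1)) ≤ 2 ^ (N - β.length) :=
      Nat.pow_le_pow_right two_pos (by omega)
    simp only [List.map_append, List.map_cons, List.sum_append, List.sum_cons, branchWeight,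
      List.length_append, List.length_singleton]
    omega
  | @pb L₁ L₂ β =>
    have hlen : β.length + 1 ≤ N := by
      simpa using hN _ (List.mem_append_right _ List.mem_cons_self)
    have hhalf : 2 ^ (N - (β.length + 1)) + 2 ^ (N - (β.length + 1)) = 2 ^ (N - β.length) := by
      rw [← two_mul, ← pow_succ']
      congr 1
      omega
    simp only [List.map_append, List.map_cons, List.sum_append, List.sum_cons, branchWeight,
      List.length_append, List.length_singleton]
    omega

lemma length_le_two_pow_of_reachable {Φ : List Clause} {M : ℕ}
    (hdepth : ∀ T, Relation.ReflTransGen ProcStep [Φ] T → ∀ β ∈ T, β.length ≤ Φ.length + M)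
    {T : List Branch} (hT : Relation.ReflTransGen ProcStep [Φ] T) : T.length ≤ 2 ^ M := by
  have hweight : (T.map (branchWeight (Φ.length + M))).sum ≤ 2 ^ M := by
    induction hT with
    | refl => simp [branchWeight]
    | tail hreach h ih => exact (h.sum_branchWeight_le (hdepth _ (hreach.tail h))).trans ih
  calc T.length = (T.map (branchWeight (Φ.length + M))).length := (List.length_map _).symm
    _ ≤ (T.map (branchWeight (Φ.length + M))).sum :=
      List.length_le_sum_of_one_le _ (by simp [branchWeight, Nat.one_le_two_pow])
    _ ≤ 2 ^ M := hweight

end KE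

open FourLQS KE in
/-- Let `ℓ` be the maximum number of literals in a purely
universal conjunct `Sᵢ` of `φ̄_KB`, `m` the number of such conjuncts, `r` the
maximum number of universal quantifiers in an `Sᵢ`, and `k := |Var₀(φ̄_KB)|`.
Then (in `O`-notation, i.e. up to a constant `C` independent of all the data)
every branch of a tableau produced by Procedure Saturate-KB from `Φ_KB` is
obtained by `O(ℓ·m·k^r)` rule applications — so the maximum depth of `T_KB`
(the number of formulae on a branch beyond the initial ones) is `O(ℓ·m·k^r)` —
and `T_KB` has `O(2^{ℓ·m·k^r})` leaves (branches); consequently the procedure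
produces at most `O(2^{ℓ·m·k^r})` induced interpretations `𝓜_ϑ` of `Φ_KB`. -/
theorem tableau_depth_and_leaves_bound :
    ∃ C : ℕ, 0 < C ∧
      ∀ (Fs : List Lit) (Ss : List PUConj) (ℓ r : ℕ),
        (∀ S ∈ Ss, S.2.length ≤ ℓ) →
        (∀ S ∈ Ss, S.1.length ≤ r) →
        ∀ T : List Branch,
          Relation.ReflTransGen ProcStep [PhiKB Fs Ss] T →
          -- each branch is produced by O(ℓ·m·k^r) rule applications,
          -- i.e. the depth of the tableau is O(ℓ·m·k^r)
          (∀ β ∈ T, β.length ≤ (PhiKB Fs Ss).length +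
            C * (ℓ * Ss.length * (fv0 (phibar Fs Ss)).card ^ r + 1)) ∧
          -- the number of leaves (branches), and hence the number of induced
          -- interpretations 𝓜_ϑ, is O(2^{ℓ·m·k^r})
          T.length ≤
            2 ^ (C * (ℓ * Ss.length * (fv0 (phibar Fs Ss)).card ^ r + 1)) := by
  refine ⟨2, two_pos, fun Fs Ss ℓ r hℓ hr T hT => ?_⟩
  set U := complClosure (instanceLits Fs Ss)
  have hdepth : ∀ T', Relation.ReflTransGen ProcStep [PhiKB Fs Ss] T' →
      ∀ β ∈ T', β.length ≤ (PhiKB Fs Ss).length + U.length := fun _ hT' β hβ =>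
    (isUnitExtension_of_reachable
      (fun _ hc hunit => List.Subset.trans (subset_instanceLits hc hunit) (subset_complClosure _))
      (fun _ => compl_mem_complClosure) hT' β hβ).length_le
  have hU : U.length ≤ 2 * (ℓ * Ss.length * (fv0 (phibar Fs Ss)).card ^ r) := by
    rw [length_complClosure]
    exact Nat.mul_le_mul_left 2 (length_instanceLits_le hℓ hr)
  exact ⟨fun β hβ => (hdepth T hT β hβ).trans (by omega),
    (length_le_two_pow_of_reachable hdepth hT).trans (Nat.pow_le_pow_right two_pos (by omega))⟩
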